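/- Let μ, ν : 𝔻 → ℝ be continuous, let z₀, w₀ ∈ 𝔻 and R > 0. Then the function σ ↦ Φ(z₀, w₀, σ) is continuous on the unit circle {σ ∈ ℂ : |σ| = 1}, and consequently the infimum defining d^R_{μ,ν}(z₀, w₀) is attained: there exists a disk Möbius transformation m with m(z₀) = w₀ such that ∫_{Ω_{z₀,R}} |μ(z) − ν(m(z))| dvol_H(z) = d^R_{μ,ν}(z₀, w₀). -/

import Mathlib

open Complex MeasureTheory ENNReal

noncomputable section

/-- The open unit disk in `ℂ`. -/
def unitDisk : Set ℂ := {z : ℂ | ‖z‖ < 1}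

/-- A disk Möbius transformation: `z ↦ τ (z - a)/(1 - conj a · z)` with `a ∈ 𝔻`, `|τ| = 1`. -/
def IsDiskMobius (m : ℂ → ℂ) : Prop :=
  ∃ a τ : ℂ, ‖a‖ < 1 ∧ ‖τ‖ = 1 ∧
    ∀ z : ℂ, m z = τ * (z - a) / (1 - (starRingEnd ℂ) a * z)

/-- The hyperbolic disk `Ω_{z₀,R}` of radius `R` centered at `z₀`. -/
def hypDisk (z₀ : ℂ) (R : ℝ) : Set ℂ :=
  {z : ℂ | ‖z‖ < 1 ∧
    ‖(z - z₀) / (1 - (starRingEnd ℂ) z₀ * z)‖ < Real.tanh R}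

/-- The hyperbolic area measure `dvol_H = (1 - |z|²)⁻² dλ` on `ℂ`. -/
def volH : Measure ℂ :=
  volume.withDensity (fun z => ENNReal.ofReal (((1 - ‖z‖ ^ 2) ^ 2)⁻¹))

/-- The local dissimilarity distance `d^R_{μ,ν}(z₀,w₀)`, valued in `[0,∞]`. -/
def dR (R : ℝ) (μ ν : ℂ → ℝ) (z₀ w₀ : ℂ) : ℝ≥0∞ :=
  ⨅ m : {m : ℂ → ℂ // IsDiskMobius m ∧ m z₀ = w₀},
    ∫⁻ z in hypDisk z₀ R, ENNReal.ofReal |μ z - ν (m.1 z)| ∂volH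

/-- The measure on `𝔻` with density `μ` w.r.t. the hyperbolic measure. -/
def muH (μ : ℂ → ℝ) : Measure ℂ :=
  (volH.restrict unitDisk).withDensity (fun z => ENNReal.ofReal (μ z))

/-- The generalized Kantorovich transportation cost `T^R_d(μ,ν)`. -/
def TRd (R : ℝ) (μ ν : ℂ → ℝ) : ℝ≥0∞ :=
  ⨅ π : {π : Measure (ℂ × ℂ) //
      π.map Prod.fst = muH μ ∧ π.map Prod.snd = muH ν},
    ∫⁻ p, dR R μ ν p.1 p.2 ∂π.1

def aOf (z₀ w₀ σ : ℂ) : ℂ :=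
  (z₀ - w₀ * (starRingEnd ℂ) σ) / (1 - (starRingEnd ℂ) z₀ * w₀ * (starRingEnd ℂ) σ)

def tauOf (z₀ w₀ σ : ℂ) : ℂ :=
  σ * (1 - (starRingEnd ℂ) z₀ * w₀ * (starRingEnd ℂ) σ) / (1 - z₀ * (starRingEnd ℂ) w₀ * σ)

/-- The Möbius transformation `m_{z₀,w₀,σ}`. -/
def stdMobius (z₀ w₀ σ : ℂ) (z : ℂ) : ℂ :=
  tauOf z₀ w₀ σ * (z - aOf z₀ w₀ σ) / (1 - (starRingEnd ℂ) (aOf z₀ w₀ σ) * z)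

/-- `Φ(z₀,w₀,σ)`. -/
def Phi (R : ℝ) (μ ν : ℂ → ℝ) (z₀ w₀ σ : ℂ) : ℝ≥0∞ :=
  ∫⁻ z in hypDisk z₀ R, ENNReal.ofReal |μ z - ν (stdMobius z₀ w₀ σ z)| ∂volH

/-!
Every disk Möbius map sending `z₀` to `w₀` is `m_{z₀,w₀,σ}` for some `σ` on the unit circle: with
`φ_c(b) = (c - b)/(1 - c̄ b)`, the parameters of `m_{z₀,w₀,σ}` are `a = φ_{z₀}(w₀ σ̄)` and a
unimodular `τ`, and `φ_{z₀}` is an involution. So `d^R_{μ,ν}(z₀,w₀)` is the infimum of `Φ` over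
the circle. The integrand of `Φ` is jointly continuous in `(σ, z)` on the circle times the closed
hyperbolic disk, a compact subset of `𝔻` of finite hyperbolic area, so dominated convergence makes
`Φ` continuous, and it attains its infimum on the compact circle.
-/

open ComplexConjugate

theorem one_sub_conj_mul_ne_zero {c z : ℂ} (hc : ‖c‖ < 1) (hz : ‖z‖ ≤ 1) :
    1 - conj c * z ≠ 0 := by
  rw [sub_ne_zero]
  intro h
  have : ‖conj c * z‖ < 1 := by
    rw [norm_mul, Complex.norm_conj]
    nlinarith [norm_nonneg c, norm_nonneg z]
  rw [← h, norm_one] at this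
  exact this.false

/-- The disk automorphism `φ_c`, an involution exchanging `0` and `c`. -/
def mobiusInvolution (c z : ℂ) : ℂ := (c - z) / (1 - conj c * z)

theorem normSq_one_sub_conj_mul_sub_normSq_sub (c z : ℂ) :
    normSq (1 - conj c * z) - normSq (c - z) = (1 - normSq c) * (1 - normSq z) := by
  simp only [normSq_apply, sub_re, sub_im, mul_re, mul_im, one_re, one_im, conj_re, conj_im]
  ring

theorem norm_mobiusInvolution_lt_one {c z : ℂ} (hc : ‖c‖ < 1) (hz : ‖z‖ < 1) :
    ‖mobiusInvolution c z‖ < 1 := by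
  have hden : 0 < ‖1 - conj c * z‖ := norm_pos_iff.2 (one_sub_conj_mul_ne_zero hc hz.le)
  rw [mobiusInvolution, norm_div, div_lt_one hden]
  have hc' : normSq c < 1 := by rw [normSq_eq_norm_sq]; nlinarith [norm_nonneg c]
  have hz' : normSq z < 1 := by rw [normSq_eq_norm_sq]; nlinarith [norm_nonneg z]
  have key := normSq_one_sub_conj_mul_sub_normSq_sub c z
  rw [normSq_eq_norm_sq, normSq_eq_norm_sq] at key
  nlinarith [norm_nonneg (c - z), mul_pos (sub_pos.2 hc') (sub_pos.2 hz')]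

theorem sub_mobiusInvolution {c z : ℂ} (hden : 1 - conj c * z ≠ 0) :
    c - mobiusInvolution c z = z * (1 - conj c * c) / (1 - conj c * z) := by
  rw [mobiusInvolution, eq_div_iff hden, sub_mul, div_mul_cancel₀ _ hden]
  ring

theorem one_sub_conj_mul_mobiusInvolution {c z : ℂ} (hden : 1 - conj c * z ≠ 0) :
    1 - conj c * mobiusInvolution c z = (1 - conj c * c) / (1 - conj c * z) := by
  rw [mobiusInvolution, eq_div_iff hden, sub_mul, mul_assoc, div_mul_cancel₀ _ hden]
  ring

theorem mobiusInvolution_mobiusInvolution {c z : ℂ} (hc : ‖c‖ < 1)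
    (hden : 1 - conj c * z ≠ 0) : mobiusInvolution c (mobiusInvolution c z) = z := by
  have hc' : 1 - conj c * c ≠ 0 := one_sub_conj_mul_ne_zero hc hc.le
  rw [mobiusInvolution, sub_mobiusInvolution hden, one_sub_conj_mul_mobiusInvolution hden,
    mul_div_assoc, mul_div_cancel_right₀ _ (div_ne_zero hc' hden)]

theorem aOf_eq_mobiusInvolution (z₀ w₀ σ : ℂ) :
    aOf z₀ w₀ σ = mobiusInvolution z₀ (w₀ * conj σ) := by
  rw [aOf, mobiusInvolution, mul_assoc]

theorem tauOf_eq (z₀ w₀ σ : ℂ) :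
    tauOf z₀ w₀ σ = σ * (1 - conj z₀ * (w₀ * conj σ)) / conj (1 - conj z₀ * (w₀ * conj σ)) := by
  simp only [tauOf, map_sub, map_one, map_mul, conj_conj, mul_assoc]

theorem stdMobius_eq (z₀ w₀ σ z : ℂ) :
    stdMobius z₀ w₀ σ z = -tauOf z₀ w₀ σ * mobiusInvolution (aOf z₀ w₀ σ) z := by
  rw [stdMobius, mobiusInvolution]
  ring

section
variable {z₀ w₀ σ : ℂ}

theorem norm_mul_conj_lt_one (hw₀ : ‖w₀‖ < 1) (hσ : ‖σ‖ = 1) : ‖w₀ * conj σ‖ < 1 := by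
  rwa [norm_mul, Complex.norm_conj, hσ, mul_one]

theorem norm_aOf_lt_one (hz₀ : ‖z₀‖ < 1) (hw₀ : ‖w₀‖ < 1) (hσ : ‖σ‖ = 1) :
    ‖aOf z₀ w₀ σ‖ < 1 := by
  rw [aOf_eq_mobiusInvolution]
  exact norm_mobiusInvolution_lt_one hz₀ (norm_mul_conj_lt_one hw₀ hσ)

theorem norm_tauOf_eq_one (hz₀ : ‖z₀‖ < 1) (hw₀ : ‖w₀‖ < 1) (hσ : ‖σ‖ = 1) :
    ‖tauOf z₀ w₀ σ‖ = 1 := by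
  have hden := one_sub_conj_mul_ne_zero hz₀ (norm_mul_conj_lt_one hw₀ hσ).le
  rw [tauOf_eq, norm_div, norm_mul, Complex.norm_conj, hσ, one_mul,
    div_self (norm_ne_zero_iff.2 hden)]

theorem stdMobius_mem_unitDisk (hz₀ : ‖z₀‖ < 1) (hw₀ : ‖w₀‖ < 1) (hσ : ‖σ‖ = 1) {z : ℂ}
    (hz : z ∈ unitDisk) : stdMobius z₀ w₀ σ z ∈ unitDisk := by
  show ‖_‖ < 1
  rw [stdMobius_eq, norm_mul, norm_neg, norm_tauOf_eq_one hz₀ hw₀ hσ, one_mul]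
  exact norm_mobiusInvolution_lt_one (norm_aOf_lt_one hz₀ hw₀ hσ) hz

theorem stdMobius_self (hz₀ : ‖z₀‖ < 1) (hw₀ : ‖w₀‖ < 1) (hσ : ‖σ‖ = 1) :
    stdMobius z₀ w₀ σ z₀ = w₀ := by
  have hb := one_sub_conj_mul_ne_zero hz₀ (norm_mul_conj_lt_one hw₀ hσ).le
  have hz : 1 - conj z₀ * z₀ ≠ 0 := one_sub_conj_mul_ne_zero hz₀ hz₀.le
  have hσ' : σ * conj σ = 1 := by rw [Complex.mul_conj', hσ]; norm_num
  have hden : 1 - conj (aOf z₀ w₀ σ) * z₀ = conj (1 - conj z₀ * aOf z₀ w₀ σ) := by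
    simp only [map_sub, map_one, map_mul, conj_conj, mul_comm]
  rw [stdMobius, hden, aOf_eq_mobiusInvolution, one_sub_conj_mul_mobiusInvolution hb,
    sub_mobiusInvolution hb, tauOf_eq]
  generalize hbdef : w₀ * conj σ = b at *
  have hbc : conj (1 - conj z₀ * b) ≠ 0 := (map_ne_zero _).2 hb
  have hzc : conj (1 - conj z₀ * z₀) = 1 - conj z₀ * z₀ := by
    simp only [map_sub, map_one, map_mul, conj_conj, mul_comm]
  rw [map_div₀, hzc]
  field_simp
  rw [← hbdef]
  linear_combination w₀ * hσ'

theorem isDiskMobius_stdMobius (hz₀ : ‖z₀‖ < 1) (hw₀ : ‖w₀‖ < 1) (hσ : ‖σ‖ = 1) :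
    IsDiskMobius (stdMobius z₀ w₀ σ) :=
  ⟨aOf z₀ w₀ σ, tauOf z₀ w₀ σ, norm_aOf_lt_one hz₀ hw₀ hσ, norm_tauOf_eq_one hz₀ hw₀ hσ,
    fun _ => rfl⟩

theorem exists_stdMobius_eq (hz₀ : ‖z₀‖ < 1) {m : ℂ → ℂ} (hm : IsDiskMobius m)
    (hm₀ : m z₀ = w₀) : ∃ σ : ℂ, ‖σ‖ = 1 ∧ m = stdMobius z₀ w₀ σ := by
  obtain ⟨a, τ, ha, hτ, hm⟩ := hm
  set d := 1 - conj a * z₀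
  have hd : d ≠ 0 := one_sub_conj_mul_ne_zero ha hz₀.le
  have hdc : conj d ≠ 0 := (map_ne_zero _).2 hd
  have hdc' : conj d = 1 - conj z₀ * a := by
    simp only [d, map_sub, map_one, map_mul, conj_conj, mul_comm]
  have hτ' : τ * conj τ = 1 := by rw [Complex.mul_conj', hτ]; norm_num
  refine ⟨τ * conj d / d, ?_, ?_⟩
  · rw [norm_div, norm_mul, hτ, Complex.norm_conj, one_mul, div_self (norm_ne_zero_iff.2 hd)]
  have hw₀ : w₀ = τ * (z₀ - a) / d := by rw [← hm₀, hm]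
  have hb : w₀ * conj (τ * conj d / d) = mobiusInvolution z₀ a := by
    rw [hw₀, mobiusInvolution, ← hdc']
    simp only [map_div₀, map_mul, conj_conj]
    field_simp
    linear_combination (z₀ - a) * hτ'
  have ha' : 1 - conj z₀ * a ≠ 0 := hdc' ▸ hdc
  have haOf : aOf z₀ w₀ (τ * conj d / d) = a := by
    rw [aOf_eq_mobiusInvolution, hb, mobiusInvolution_mobiusInvolution hz₀ ha']
  have hz : 1 - conj z₀ * z₀ ≠ 0 := one_sub_conj_mul_ne_zero hz₀ hz₀.le
  have htauOf : tauOf z₀ w₀ (τ * conj d / d) = τ := by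
    rw [tauOf_eq, hb, one_sub_conj_mul_mobiusInvolution ha', ← hdc', map_div₀, conj_conj]
    have hzc : conj (1 - conj z₀ * z₀) = 1 - conj z₀ * z₀ := by
      simp only [map_sub, map_one, map_mul, conj_conj, mul_comm]
    rw [hzc]
    field_simp
  funext z
  rw [hm, stdMobius, haOf, htauOf]

end

theorem isOpen_unitDisk : IsOpen unitDisk := isOpen_lt continuous_norm continuous_const

theorem isCompact_unitCircle : IsCompact {σ : ℂ | ‖σ‖ = 1} := by
  convert isCompact_sphere (0 : ℂ) 1 using 1
  ext
  simp

section HyperbolicDisk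
variable {z₀ : ℂ} {R : ℝ}

theorem isOpen_hypDisk (hz₀ : ‖z₀‖ < 1) : IsOpen (hypDisk z₀ R) := by
  have hcont : ContinuousOn (fun z => ‖(z - z₀) / (1 - conj z₀ * z)‖) unitDisk :=
    (ContinuousOn.div (by fun_prop) (by fun_prop)
      fun _ hz => one_sub_conj_mul_ne_zero hz₀ (le_of_lt hz)).norm
  exact hcont.isOpen_inter_preimage isOpen_unitDisk isOpen_Iio

/-- The closed hyperbolic disk, written without division so that it is visibly closed in `ℂ`. -/
def closedHypDisk (z₀ : ℂ) (R : ℝ) : Set ℂ :=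
  {z | ‖z‖ ≤ 1 ∧ ‖z - z₀‖ ≤ Real.tanh R * ‖1 - conj z₀ * z‖}

theorem isCompact_closedHypDisk : IsCompact (closedHypDisk z₀ R) := by
  refine Metric.isCompact_of_isClosed_isBounded ?_
    ((Metric.isBounded_closedBall (x := (0 : ℂ)) (r := 1)).subset fun _ hz => by simpa using hz.1)
  exact (isClosed_le continuous_norm continuous_const).inter
    (isClosed_le (continuous_id.sub continuous_const).norm
      (continuous_const.mul (continuous_const.sub (continuous_const.mul continuous_id)).norm))

theorem hypDisk_subset_closedHypDisk (hz₀ : ‖z₀‖ < 1) : hypDisk z₀ R ⊆ closedHypDisk z₀ R := by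
  rintro z ⟨hz, hzR⟩
  have hden := norm_pos_iff.2 (one_sub_conj_mul_ne_zero hz₀ hz.le)
  rw [norm_div, div_lt_iff₀ hden] at hzR
  exact ⟨hz.le, hzR.le⟩

theorem closedHypDisk_subset_unitDisk (hz₀ : ‖z₀‖ < 1) : closedHypDisk z₀ R ⊆ unitDisk := by
  rintro z ⟨hz, hzR⟩
  refine lt_of_le_of_ne hz fun hz1 => ?_
  have hzz : conj z * z = 1 := by rw [Complex.conj_mul', hz1]; norm_num
  have hden : ‖1 - conj z₀ * z‖ = ‖z - z₀‖ := by
    have : 1 - conj z₀ * z = z * conj (z - z₀) := by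
      rw [map_sub]
      linear_combination -hzz
    rw [this, norm_mul, Complex.norm_conj, hz1, one_mul]
  have hne : 0 < ‖z - z₀‖ := norm_pos_iff.2 (sub_ne_zero.2 fun h => by simp_all)
  rw [hden] at hzR
  nlinarith [Real.tanh_lt_one R]

end HyperbolicDisk

theorem volH_lt_top_of_isCompact {K : Set ℂ} (hK : IsCompact K) (hKD : K ⊆ unitDisk) :
    volH K < ∞ := by
  have hdens : ContinuousOn (fun z : ℂ => ((1 - ‖z‖ ^ 2) ^ 2)⁻¹) K :=
    ContinuousOn.inv₀ (by fun_prop) fun z hz =>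
      pow_ne_zero 2 (sub_pos.2 (pow_lt_one₀ (norm_nonneg z) (hKD hz) two_ne_zero)).ne'
  rw [volH, withDensity_apply _ hK.measurableSet]
  exact (hdens.integrableOn_compact hK).lintegral_lt_top

theorem continuousOn_setLIntegral_ofReal_of_isCompact {X Y : Type*} [TopologicalSpace X]
    [FirstCountableTopology X] [TopologicalSpace Y] [MeasurableSpace Y] [OpensMeasurableSpace Y]
    {μ : Measure Y} {f : X → Y → ℝ} {s : Set X} {t K : Set Y} (hs : IsCompact s)
    (hK : IsCompact K) (htK : t ⊆ K) (ht : MeasurableSet t) (hμK : μ K ≠ ∞)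
    (hf : ContinuousOn (Function.uncurry f) (s ×ˢ K)) :
    ContinuousOn (fun x => ∫⁻ y in t, ENNReal.ofReal (f x y) ∂μ) s := by
  obtain ⟨C, hC⟩ := (hs.prod hK).exists_bound_of_continuousOn hf
  have hslice : ∀ x ∈ s, ContinuousOn (f x) t := fun x hx =>
    hf.comp (continuousOn_const.prodMk continuousOn_id) fun y hy => ⟨hx, htK hy⟩
  intro x hx
  refine tendsto_lintegral_filter_of_dominated_convergence' (fun _ => ENNReal.ofReal C) ?_ ?_ ?_ ?_
  · filter_upwards [self_mem_nhdsWithin] with x' hx'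
    exact ENNReal.measurable_ofReal.comp_aemeasurable ((hslice x' hx').aemeasurable ht)
  · filter_upwards [self_mem_nhdsWithin] with x' hx'
    exact ae_restrict_of_forall_mem ht fun y hy =>
      ENNReal.ofReal_le_ofReal ((le_abs_self _).trans (hC (x', y) ⟨hx', htK hy⟩))
  · rw [setLIntegral_const]
    exact ENNReal.mul_ne_top ofReal_ne_top ((measure_mono htK).trans_lt hμK.lt_top).ne
  · refine ae_restrict_of_forall_mem ht fun y hy => ?_
    exact ENNReal.continuous_ofReal.continuousAt.tendsto.comp
      ((hf (x, y) ⟨hx, htK hy⟩).comp (f := fun x' => (x', y))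
        (continuousWithinAt_id.prodMk continuousWithinAt_const)
        fun x' hx' => ⟨hx', htK hy⟩)

section
variable {z₀ w₀ : ℂ}

theorem continuousOn_stdMobius (hz₀ : ‖z₀‖ < 1) (hw₀ : ‖w₀‖ < 1) :
    ContinuousOn (fun p : ℂ × ℂ => stdMobius z₀ w₀ p.1 p.2) ({σ : ℂ | ‖σ‖ = 1} ×ˢ unitDisk) := by
  have haOf : ContinuousOn (aOf z₀ w₀) {σ : ℂ | ‖σ‖ = 1} := by
    refine ContinuousOn.div (by fun_prop) (by fun_prop) fun σ hσ => ?_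
    rw [mul_assoc]
    exact one_sub_conj_mul_ne_zero hz₀ (norm_mul_conj_lt_one hw₀ hσ).le
  have htauOf : ContinuousOn (tauOf z₀ w₀) {σ : ℂ | ‖σ‖ = 1} := by
    refine ContinuousOn.div (by fun_prop) (by fun_prop) fun σ hσ => ?_
    have := (map_ne_zero (starRingEnd ℂ)).2
      (one_sub_conj_mul_ne_zero hz₀ (norm_mul_conj_lt_one hw₀ hσ).le)
    simpa only [map_sub, map_one, map_mul, conj_conj, mul_assoc] using this
  have ha : ContinuousOn (fun p : ℂ × ℂ => aOf z₀ w₀ p.1) ({σ : ℂ | ‖σ‖ = 1} ×ˢ unitDisk) :=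
    haOf.comp continuousOn_fst fun p hp => hp.1
  refine ContinuousOn.div ((htauOf.comp continuousOn_fst fun p hp => hp.1).mul
    (continuousOn_snd.sub ha)) (continuousOn_const.sub
    ((Complex.continuous_conj.comp_continuousOn ha).mul continuousOn_snd))
    fun (p : ℂ × ℂ) (hp : p ∈ {σ : ℂ | ‖σ‖ = 1} ×ˢ unitDisk) => ?_
  exact one_sub_conj_mul_ne_zero (norm_aOf_lt_one hz₀ hw₀ hp.1) (le_of_lt hp.2)

theorem continuousOn_Phi {μ ν : ℂ → ℝ} (hμ : ContinuousOn μ unitDisk)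
    (hν : ContinuousOn ν unitDisk) (hz₀ : ‖z₀‖ < 1) (hw₀ : ‖w₀‖ < 1) (R : ℝ) :
    ContinuousOn (fun σ : ℂ => Phi R μ ν z₀ w₀ σ) {σ : ℂ | ‖σ‖ = 1} := by
  have hK := closedHypDisk_subset_unitDisk (R := R) hz₀
  have hintegrand : ContinuousOn (fun p : ℂ × ℂ => |μ p.2 - ν (stdMobius z₀ w₀ p.1 p.2)|)
      ({σ : ℂ | ‖σ‖ = 1} ×ˢ unitDisk) :=
    ((hμ.comp continuousOn_snd fun p hp => hp.2).sub (hν.comp (continuousOn_stdMobius hz₀ hw₀)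
      fun p hp => stdMobius_mem_unitDisk hz₀ hw₀ hp.1 hp.2)).abs
  exact continuousOn_setLIntegral_ofReal_of_isCompact isCompact_unitCircle
    isCompact_closedHypDisk (hypDisk_subset_closedHypDisk hz₀) (isOpen_hypDisk hz₀).measurableSet
    (volH_lt_top_of_isCompact isCompact_closedHypDisk hK).ne
    (hintegrand.mono (Set.prod_mono le_rfl hK))

theorem dR_eq_iInf_Phi (hz₀ : ‖z₀‖ < 1) (hw₀ : ‖w₀‖ < 1) (R : ℝ) (μ ν : ℂ → ℝ) :
    dR R μ ν z₀ w₀ = ⨅ σ : {σ : ℂ | ‖σ‖ = 1}, Phi R μ ν z₀ w₀ σ := by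
  refine le_antisymm (le_iInf fun σ => ?_) (le_iInf fun m => ?_)
  · exact iInf_le_of_le ⟨stdMobius z₀ w₀ σ, isDiskMobius_stdMobius hz₀ hw₀ σ.2,
      stdMobius_self hz₀ hw₀ σ.2⟩ le_rfl
  · obtain ⟨σ, hσ, hm⟩ := exists_stdMobius_eq hz₀ m.2.1 m.2.2
    exact iInf_le_of_le ⟨σ, hσ⟩ (by rw [Phi, hm])

end

theorem Phi_continuous_and_dR_attained_general (μ ν : ℂ → ℝ)
    (hμ : ContinuousOn μ unitDisk) (hν : ContinuousOn ν unitDisk)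
    (z₀ w₀ : ℂ) (hz₀ : z₀ ∈ unitDisk) (hw₀ : w₀ ∈ unitDisk) (R : ℝ) :
    ContinuousOn (fun σ : ℂ => Phi R μ ν z₀ w₀ σ) {σ : ℂ | ‖σ‖ = 1} ∧
    ∃ m : ℂ → ℂ, IsDiskMobius m ∧ m z₀ = w₀ ∧
      (∫⁻ z in hypDisk z₀ R, ENNReal.ofReal |μ z - ν (m z)| ∂volH)
        = dR R μ ν z₀ w₀ := by
  have hcont := continuousOn_Phi hμ hν hz₀ hw₀ R
  obtain ⟨σ, hσ, hmin⟩ := isCompact_unitCircle.exists_isMinOn ⟨1, norm_one⟩ hcont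
  refine ⟨hcont, stdMobius z₀ w₀ σ, isDiskMobius_stdMobius hz₀ hw₀ hσ,
    stdMobius_self hz₀ hw₀ hσ, ?_⟩
  rw [dR_eq_iInf_Phi hz₀ hw₀, hmin.iInf_eq hσ]
  rfl

theorem Phi_continuous_and_dR_attained (μ ν : ℂ → ℝ)
    (hμ : ContinuousOn μ unitDisk) (hν : ContinuousOn ν unitDisk)
    (z₀ w₀ : ℂ) (hz₀ : z₀ ∈ unitDisk) (hw₀ : w₀ ∈ unitDisk) (R : ℝ) (hR : 0 < R) :
    ContinuousOn (fun σ : ℂ => Phi R μ ν z₀ w₀ σ) {σ : ℂ | ‖σ‖ = 1} ∧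
    ∃ m : ℂ → ℂ, IsDiskMobius m ∧ m z₀ = w₀ ∧
      (∫⁻ z in hypDisk z₀ R, ENNReal.ofReal |μ z - ν (m z)| ∂volH)
        = dR R μ ν z₀ w₀ :=
  Phi_continuous_and_dR_attained_general μ ν hμ hν z₀ w₀ hz₀ hw₀ R

end
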